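/- Let L = ⟨a,b,c,d,x⟩ with the Grigorchuk generators and the adding machine. Then the commutator subgroup γ₂(L) contains γ₂(L) × γ₂(L), i.e. for all g,h ∈ γ₂(L), the automorphism acting as g on the left subtree and h on the right subtree belongs to γ₂(L). -/

import Mathlib

namespace GrigTree

/-- Vertices of the rooted binary tree: finite binary strings. -/
abbrev V := List Bool

/-- The rooted automorphism `a`, swapping the two first-level subtrees. -/
def aFun : V → V
  | [] => []
  | i :: w => (!i) :: w

lemma aFun_invol : ∀ w, aFun (aFun w) = w
  | [] => rfl
  | _ :: _ => by simp [aFun]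

/-- The automorphism `a` as a permutation. -/
def a : Equiv.Perm V := ⟨aFun, aFun, aFun_invol, aFun_invol⟩

/-- The adding machine `x = (1, x)a`. -/
def xFun : V → V
  | [] => []
  | false :: w => true :: w
  | true :: w => false :: xFun w

def xInvFun : V → V
  | [] => []
  | true :: w => false :: w
  | false :: w => true :: xInvFun w

lemma x_left_inv : ∀ w, xInvFun (xFun w) = w
  | [] => rfl
  | false :: _ => rfl
  | true :: w => by simp [xFun, xInvFun, x_left_inv w]

lemma x_right_inv : ∀ w, xFun (xInvFun w) = w
  | [] => rfl
  | true :: _ => rfl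
  | false :: w => by simp [xFun, xInvFun, x_right_inv w]

/-- The adding machine as a permutation of the tree. -/
def x : Equiv.Perm V := ⟨xFun, xInvFun, x_left_inv, x_right_inv⟩

/-- States of the Grigorchuk automaton (the nontrivial ones). -/
inductive St | b | c | d
  deriving DecidableEq

def nextSt : St → St
  | .b => .c
  | .c => .d
  | .d => .b

def usesA : St → Bool
  | .b => true
  | .c => true
  | .d => false

/-- The action of the Grigorchuk generators `b = (a,c)`, `c = (a,d)`, `d = (1,b)`. -/
def gFun : St → V → V
  | _, [] => []
  | s, false :: w => false :: (if usesA s then aFun w else w)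
  | s, true :: w => true :: gFun (nextSt s) w

lemma gFun_invol : ∀ (w : V) (s : St), gFun s (gFun s w) = w
  | [], _ => rfl
  | false :: w, s => by cases h : usesA s <;> simp [gFun, h, aFun_invol]
  | true :: w, s => by simp [gFun, gFun_invol w]

def gPerm (s : St) : Equiv.Perm V :=
  ⟨gFun s, gFun s, fun w => gFun_invol w s, fun w => gFun_invol w s⟩

/-- The Grigorchuk generator `b = (a, c)`. -/
def b : Equiv.Perm V := gPerm .b
/-- The Grigorchuk generator `c = (a, d)`. -/
def c : Equiv.Perm V := gPerm .c
/-- The Grigorchuk generator `d = (1, b)`. -/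
def d : Equiv.Perm V := gPerm .d

def pairFun (f g : V → V) : V → V
  | [] => []
  | false :: w => false :: f w
  | true :: w => true :: g w

/-- The automorphism `(f, g)` acting as `f` on the left subtree and as `g` on the
right subtree, fixing the first level. -/
def pair (f g : Equiv.Perm V) : Equiv.Perm V where
  toFun := pairFun f g
  invFun := pairFun f.symm g.symm
  left_inv := by rintro (_ | ⟨i, w⟩) <;> first | rfl | cases i <;> simp [pairFun]
  right_inv := by rintro (_ | ⟨i, w⟩) <;> first | rfl | cases i <;> simp [pairFun]

/-- The commutator `[u, v] = u⁻¹v⁻¹uv` of the paper.  Words of tree automorphisms in the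
paper are composed left-to-right, so the paper's word `u⁻¹v⁻¹uv` corresponds to the
permutation `v * u * v⁻¹ * u⁻¹` under the usual (right-to-left) composition of functions. -/
def pcomm (u v : Equiv.Perm V) : Equiv.Perm V := v * u * v⁻¹ * u⁻¹

/-- The conjugate `v⁻¹ u v` of the paper (left-to-right composition). -/
def pconj (u v : Equiv.Perm V) : Equiv.Perm V := v * u * v⁻¹


/-- The group `L = ⟨a, b, c, d, x⟩`. -/
def L : Subgroup (Equiv.Perm V) := Subgroup.closure {a, b, c, d, x}

/-! Commutators in the dihedral group `⟨a, d⟩` are powers of its central element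
`⁅a, d⁆ = (b, b)`, and every `g ∈ L` is the right coordinate of some `(q, g) ∈ L` with
`q ∈ ⟨a, d⟩`. For `g, h ∈ L` the commutator of such lifts is `(⁅q, r⁆, ⁅g, h⁆) ∈ γ₂(L)`,
with `⁅q, r⁆` a power of `⁅a, d⁆`. Since `(⁅a, d⁆, 1) = ⁅c, (d, x * a)⁆` also lies in `γ₂(L)`,
dividing gives `(1, ⁅g, h⁆) ∈ γ₂(L)`, and conjugation by `a` swaps the two coordinates. -/

open Subgroup
open scoped commutatorElement

section CommutatorClosure

variable {G : Type*} [Group G] {K : Subgroup G} {S : Set G}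

theorem commutatorElement_mem_of_mem_closure (hS : S ⊆ normalizer (K : Set G)) {q : G}
    (hq : ∀ s ∈ S, ⁅q, s⁆ ∈ K) {r : G} (hr : r ∈ closure S) : ⁅q, r⁆ ∈ K := by
  have hnorm : closure S ≤ normalizer (K : Set G) := closure_le _ |>.mpr hS
  induction hr using closure_induction with
  | mem s hs => exact hq s hs
  | one => simp
  | mul r₁ r₂ hr₁ _ h₁ h₂ =>
    rw [commutatorElement_mul_right_eq_mul_conj]
    simpa only [mul_assoc] using mul_mem h₁ ((mem_normalizer_iff.mp (hnorm hr₁) _).mp h₂)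
  | inv r hr h =>
    rw [commutatorElement_inv_right, ← commutatorElement_inv]
    exact (mem_normalizer_iff''.mp (hnorm hr) _).mp (inv_mem h)

theorem commutator_closure_le (hS : S ⊆ normalizer (K : Set G))
    (hK : ∀ s ∈ S, ∀ t ∈ S, ⁅s, t⁆ ∈ K) : ⁅closure S, closure S⁆ ≤ K := by
  rw [commutator_le]
  intro q hq r hr
  refine commutatorElement_mem_of_mem_closure hS (fun t ht => ?_) hr
  rw [← commutatorElement_inv]
  exact inv_mem (commutatorElement_mem_of_mem_closure hS (hK t ht) hq)

theorem mem_normalizer_zpowers_of_commute {g z : G} (h : Commute g z) :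
    g ∈ normalizer (zpowers z : Set G) := by
  rw [zpowers_eq_closure]
  refine normalizer_le_normalizer_closure _ ?_
  rw [normalizer_singleton, mem_centralizer_singleton_iff]
  exact h.eq

theorem conj_mem_commutator {H : Subgroup G} {g n : G} (hg : g ∈ H) (hn : n ∈ ⁅H, H⁆) :
    g * n * g⁻¹ ∈ ⁅H, H⁆ := by
  have : g * n * g⁻¹ = ⁅g, n⁆ * n := by group
  rw [this]
  exact mul_mem (commutator_mem_commutator hg (H.commutator_le_self hn)) hn

end CommutatorClosure

open Equiv

theorem pair_mul (f g f' g' : Perm V) : pair f g * pair f' g' = pair (f * f') (g * g') :=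
  Equiv.ext <| by rintro (_ | ⟨_ | _, w⟩) <;> rfl

theorem pair_one : pair 1 1 = 1 := Equiv.ext <| by rintro (_ | ⟨_ | _, w⟩) <;> rfl

def pairHom : Perm V × Perm V →* Perm V :=
  MonoidHom.mk' (fun p => pair p.1 p.2) fun p q => (pair_mul p.1 p.2 q.1 q.2).symm

theorem pair_commutatorElement (u v s t : Perm V) :
    ⁅pair u v, pair s t⁆ = pair ⁅u, s⁆ ⁅v, t⁆ :=
  (map_commutatorElement pairHom (u, v) (s, t)).symm

theorem a_mul_pair_mul_a (f g : Perm V) : a * pair f g * a = pair g f :=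
  Equiv.ext <| by rintro (_ | ⟨_ | _, w⟩) <;> rfl

theorem a_mul_self : a * a = 1 := Equiv.ext <| by rintro (_ | ⟨_ | _, w⟩) <;> rfl

theorem a_inv : a⁻¹ = a := inv_eq_of_mul_eq_one_right a_mul_self

theorem d_inv : d⁻¹ = d :=
  inv_eq_of_mul_eq_one_right <| Equiv.ext fun w => gFun_invol w .d

theorem b_eq_pair : b = pair a c := Equiv.ext <| by rintro (_ | ⟨_ | _, w⟩) <;> rfl

theorem c_eq_pair : c = pair a d := Equiv.ext <| by rintro (_ | ⟨_ | _, w⟩) <;> rfl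

theorem d_eq_pair : d = pair 1 b := Equiv.ext <| by rintro (_ | ⟨_ | _, w⟩) <;> rfl

theorem x_eq_a_mul_pair : x = a * pair 1 x := Equiv.ext <| by rintro (_ | ⟨_ | _, w⟩) <;> rfl

theorem pair_x_one : pair x 1 = x * a := by
  rw [← a_mul_pair_mul_a, ← x_eq_a_mul_pair]

theorem pair_one_x : pair 1 x = a * x := by
  conv_rhs => rw [x_eq_a_mul_pair, ← mul_assoc, a_mul_self, one_mul]

theorem a_mem_L : a ∈ L := subset_closure (by simp)
theorem b_mem_L : b ∈ L := subset_closure (by simp)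
theorem c_mem_L : c ∈ L := subset_closure (by simp)
theorem d_mem_L : d ∈ L := subset_closure (by simp)
theorem x_mem_L : x ∈ L := subset_closure (by simp)

theorem commutatorElement_a_d : ⁅a, d⁆ = pair b b := by
  rw [commutatorElement_def, a_inv, d_inv, d_eq_pair, a_mul_pair_mul_a, pair_mul, mul_one,
    one_mul]

theorem commutator_closure_a_d_le :
    ⁅closure {a, d}, closure {a, d}⁆ ≤ zpowers ⁅a, d⁆ := by
  refine commutator_closure_le ?_ ?_
  · rintro s (rfl | rfl) <;> refine mem_normalizer_zpowers_of_commute ?_ <;>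
      rw [commutatorElement_a_d]
    · exact mul_inv_eq_iff_eq_mul.mp (by rw [a_inv, a_mul_pair_mul_a])
    · rw [d_eq_pair, Commute, SemiconjBy, pair_mul, pair_mul, one_mul, mul_one]
  · rintro s (rfl | rfl) t (rfl | rfl)
    · simp
    · exact mem_zpowers _
    · exact commutatorElement_inv a d ▸ inv_mem (mem_zpowers _)
    · simp

theorem pair_d_xa_mem_L : pair d (x * a) ∈ L := by
  have : pair d (x * a) = a * (pair x 1 * pair a d) * a := by
    rw [pair_mul, one_mul, a_mul_pair_mul_a]
  rw [this, pair_x_one, ← c_eq_pair]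
  exact mul_mem (mul_mem a_mem_L (mul_mem (mul_mem x_mem_L a_mem_L) c_mem_L)) a_mem_L

theorem pair_commutatorElement_a_d_one_mem : pair ⁅a, d⁆ 1 ∈ ⁅L, L⁆ := by
  have hcomm : ⁅d, x * a⁆ = 1 := by
    rw [← pair_x_one, d_eq_pair, pair_commutatorElement]
    simp [pair_one]
  rw [← hcomm, ← pair_commutatorElement, ← c_eq_pair]
  exact commutator_mem_commutator c_mem_L pair_d_xa_mem_L

theorem pair_one_mem_of_mem_zpowers {w : Perm V} (hw : w ∈ zpowers ⁅a, d⁆) :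
    pair w 1 ∈ ⁅L, L⁆ :=
  (zpowers_le (H := ⁅L, L⁆.comap (pairHom.comp (MonoidHom.inl _ _)))).mpr
    pair_commutatorElement_a_d_one_mem hw

theorem exists_pair_mem_L {g : Perm V} (hg : g ∈ L) : ∃ q ∈ closure {a, d}, pair q g ∈ L := by
  have hlift : L ≤ ((closure {a, d}).prod ⊤ ⊓ L.comap pairHom).map (MonoidHom.snd _ _) := by
    have lift_of {q : Perm V} (hq : q ∈ closure {a, d}) {g : Perm V} (h : pair q g ∈ L) :
        g ∈ ((closure {a, d}).prod ⊤ ⊓ L.comap pairHom).map (MonoidHom.snd _ _) :=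
      ⟨(q, g), ⟨⟨hq, trivial⟩, h⟩, rfl⟩
    have ha : a ∈ closure {a, d} := subset_closure (by simp)
    have hd : d ∈ closure {a, d} := subset_closure (by simp)
    refine closure_le _ |>.mpr ?_
    rintro s (rfl | rfl | rfl | rfl | rfl)
    · refine lift_of hd ?_
      rw [← a_mul_pair_mul_a, ← c_eq_pair]
      exact mul_mem (mul_mem a_mem_L c_mem_L) a_mem_L
    · exact lift_of (one_mem _) (d_eq_pair ▸ d_mem_L)
    · exact lift_of ha (b_eq_pair ▸ b_mem_L)
    · exact lift_of ha (c_eq_pair ▸ c_mem_L)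
    · exact lift_of (one_mem _) (pair_one_x ▸ mul_mem a_mem_L x_mem_L)
  obtain ⟨⟨q, g'⟩, ⟨⟨hq, -⟩, hqg⟩, rfl⟩ := hlift hg
  exact ⟨q, hq, hqg⟩

theorem pair_one_commutatorElement_mem {g h : Perm V} (hg : g ∈ L) (hh : h ∈ L) :
    pair 1 ⁅g, h⁆ ∈ ⁅L, L⁆ := by
  obtain ⟨q, hq, hqg⟩ := exists_pair_mem_L hg
  obtain ⟨r, hr, hrh⟩ := exists_pair_mem_L hh
  have hlifts : pair ⁅q, r⁆ ⁅g, h⁆ ∈ ⁅L, L⁆ :=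
    pair_commutatorElement q g r h ▸ commutator_mem_commutator hqg hrh
  have hcorr : pair ⁅q, r⁆⁻¹ 1 ∈ ⁅L, L⁆ :=
    pair_one_mem_of_mem_zpowers (inv_mem (commutator_closure_a_d_le
      (commutator_mem_commutator hq hr)))
  have : pair 1 ⁅g, h⁆ = pair ⁅q, r⁆⁻¹ 1 * pair ⁅q, r⁆ ⁅g, h⁆ := by
    rw [pair_mul, inv_mul_cancel, one_mul]
  rw [this]
  exact mul_mem hcorr hlifts

theorem pair_one_mem {h : Perm V} (hh : h ∈ ⁅L, L⁆) : pair 1 h ∈ ⁅L, L⁆ :=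
  (commutator_le (H₃ := ⁅L, L⁆.comap (pairHom.comp (MonoidHom.inr _ _)))).mpr
    (fun _ hg₁ _ hg₂ => pair_one_commutatorElement_mem hg₁ hg₂) hh

/-- Lemma 2.8: `γ₂(L) ⪰ γ₂(L) × γ₂(L)`: for all `g, h` in the commutator subgroup of
`L`, the automorphism acting as `g` on the left subtree and as `h` on the right
subtree belongs to the commutator subgroup of `L`. -/
theorem commutator_subgroup_contains_product :
    ∀ g h : Equiv.Perm V, g ∈ ⁅L, L⁆ → h ∈ ⁅L, L⁆ → pair g h ∈ ⁅L, L⁆ := by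
  intro g h hg hh
  have hg' : pair g 1 ∈ ⁅L, L⁆ := by
    simpa only [a_inv, a_mul_pair_mul_a] using conj_mem_commutator a_mem_L (pair_one_mem hg)
  have : pair g h = pair g 1 * pair 1 h := by rw [pair_mul, mul_one, one_mul]
  rw [this]
  exact mul_mem hg' (pair_one_mem hh)

end GrigTree
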